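/- Let M be a loopless matroid of rank d on a finite ground set. Then the coefficient of t³ in the Kazhdan–Lusztig polynomial P_M(t) equals w_{0,3} − W_{d−4,d−3} + W_{d−4,d−1} − W_{1,d−2} + W_{0,d−3} + ∑_{rk F = d−1} w_{0,2}(M_F) − ∑_{rk F = d−3} W_{0,1}(M_F)·[W_{0,2}(M^F) − W_{0,1}(M^F)] + ∑_{rk F = d−5} [ w_{0,2}(M^F) − W_{1,4}(M^F) + W_{0,3}(M^F) + W_{2,4}(M^F) − W_{2,3}(M^F) ]. -/

import Mathlib

open scoped Classical

/-- A matroid on a finite ground set, presented by its rank function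
(normalized, monotone, submodular, with unit increase). -/
structure FinMatroid where
  E : Type
  fintypeE : Fintype E
  deceqE : DecidableEq E
  rk : Finset E → ℕ
  rk_empty : rk ∅ = 0
  rk_mono : ∀ ⦃S T : Finset E⦄, S ⊆ T → rk S ≤ rk T
  rk_submod : ∀ S T : Finset E, rk (S ∪ T) + rk (S ∩ T) ≤ rk S + rk T
  rk_insert_le : ∀ (S : Finset E) (x : E), rk (insert x S) ≤ rk S + 1

attribute [instance] FinMatroid.fintypeE FinMatroid.deceqE

namespace FinMatroid

/-- The rank of the matroid: the rank of the full ground set. -/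
noncomputable def rank (M : FinMatroid) : ℕ := M.rk Finset.univ

/-- A flat: a set such that adding any new element increases the rank. -/
def IsFlat (M : FinMatroid) (F : Finset M.E) : Prop :=
  ∀ x ∉ F, M.rk (insert x F) ≠ M.rk F

/-- The (finite) collection of flats of `M`. -/
noncomputable def flats (M : FinMatroid) : Finset (Finset M.E) :=
  Finset.univ.filter M.IsFlat

/-- A matroid is loopless if every singleton has rank 1. -/
def Loopless (M : FinMatroid) : Prop := ∀ x : M.E, M.rk {x} = 1

/-- The Möbius function of the lattice of flats of `M` (extended by the usual
recursion; `mu A B = 0` unless `A ⊆ B`). -/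
noncomputable def mu (M : FinMatroid) (A B : Finset M.E) : ℤ :=
  if A = B then 1
  else -∑ G ∈ (M.flats.filter (fun G => A ⊆ G ∧ G ⊂ B)).attach,
        M.mu A G.1
termination_by B.card
decreasing_by
  exact Finset.card_lt_card (Finset.mem_filter.mp G.2).2.2

/-- The characteristic polynomial `χ_M(t) = ∑_{F flat} μ(∅,F) t^(rk M - rk F)`. -/
noncomputable def charPoly (M : FinMatroid) : Polynomial ℤ :=
  ∑ F ∈ M.flats, Polynomial.C (M.mu ∅ F) * Polynomial.X ^ (M.rank - M.rk F)

/-- The localization `M_F`: the restriction of `M` to the set `F`. -/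
noncomputable def localization (M : FinMatroid) (F : Finset M.E) : FinMatroid where
  E := {x : M.E // x ∈ F}
  fintypeE := inferInstance
  deceqE := inferInstance
  rk S := M.rk (S.map (Function.Embedding.subtype _))
  rk_empty := by simpa using M.rk_empty
  rk_mono := fun S T h => M.rk_mono (Finset.map_subset_map.mpr h)
  rk_submod := fun S T => by
    try dsimp only
    rw [Finset.map_union, Finset.map_inter]
    exact M.rk_submod _ _
  rk_insert_le := fun S x => by
    try dsimp only
    rw [Finset.map_insert]
    exact M.rk_insert_le _ _

/-- The restriction `M^F` (the contraction of `M` by the flat `F`), a matroid on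
the complement of `F`. -/
noncomputable def restrictionAt (M : FinMatroid) (F : Finset M.E) : FinMatroid where
  E := {x : M.E // x ∉ F}
  fintypeE := inferInstance
  deceqE := inferInstance
  rk S := M.rk (S.map (Function.Embedding.subtype _) ∪ F) - M.rk F
  rk_empty := by simp
  rk_mono := fun S T h =>
    Nat.sub_le_sub_right
      (M.rk_mono (Finset.union_subset_union_left (Finset.map_subset_map.mpr h))) _
  rk_submod := fun S T => by
    try dsimp only
    set e := Function.Embedding.subtype (fun x : M.E => x ∉ F) with he
    have h1 : (S ∪ T).map e ∪ F = (S.map e ∪ F) ∪ (T.map e ∪ F) := by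
      rw [Finset.map_union, Finset.union_union_distrib_right]
    have h2 : (S ∩ T).map e ∪ F = (S.map e ∪ F) ∩ (T.map e ∪ F) := by
      rw [Finset.map_inter, Finset.inter_union_distrib_right]
    have h3 := M.rk_submod (S.map e ∪ F) (T.map e ∪ F)
    have h4 : M.rk F ≤ M.rk (S.map e ∪ F) := M.rk_mono Finset.subset_union_right
    have h5 : M.rk F ≤ M.rk (T.map e ∪ F) := M.rk_mono Finset.subset_union_right
    have h6 : M.rk F ≤ M.rk ((S ∩ T).map e ∪ F) := M.rk_mono Finset.subset_union_right
    have h7 : M.rk F ≤ M.rk ((S ∪ T).map e ∪ F) := M.rk_mono Finset.subset_union_right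
    rw [h1] at h7 ⊢
    rw [h2] at h6 ⊢
    omega
  rk_insert_le := fun S x => by
    try dsimp only
    set e := Function.Embedding.subtype (fun x : M.E => x ∉ F) with he
    have h1 : (insert x S).map e ∪ F = insert (e x) (S.map e ∪ F) := by
      rw [Finset.map_insert, Finset.insert_union]
    have h2 := M.rk_insert_le (S.map e ∪ F) (e x)
    have h3 : M.rk F ≤ M.rk (S.map e ∪ F) := M.rk_mono Finset.subset_union_right
    rw [h1]
    omega

end FinMatroid

namespace FinMatroid

/-- `P` is a Kazhdan–Lusztig family: it assigns to each loopless matroid a polynomial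
satisfying the three defining conditions of the Kazhdan–Lusztig polynomial.
Condition (2), `deg P_M < rk M / 2`, is expressed by the vanishing of all coefficients
in degrees `i` with `2 i ≥ rk M`; condition (3), the Laurent-polynomial identity
`t^(rk M) P_M(t⁻¹) = ∑_F χ_{M_F}(t) P_{M^F}(t)`, is expressed via evaluation at every
nonzero rational number. -/
def IsKLFamily (P : FinMatroid → Polynomial ℤ) : Prop :=
  (∀ M : FinMatroid, M.Loopless → M.rank = 0 → P M = 1) ∧
  (∀ M : FinMatroid, M.Loopless → 0 < M.rank →
      ∀ i : ℕ, M.rank ≤ 2 * i → (P M).coeff i = 0) ∧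
  (∀ M : FinMatroid, M.Loopless → ∀ q : ℚ, q ≠ 0 →
      q ^ M.rank * Polynomial.aeval q⁻¹ (P M) =
        ∑ F ∈ M.flats,
          Polynomial.aeval q ((M.localization F).charPoly) *
            Polynomial.aeval q (P (M.restrictionAt F)))

end FinMatroid

namespace FinMatroid

/-- Doubly indexed Whitney number of the second kind: the number of pairs of flats
`E ⊆ F` with `rk E = i` and `rk F = j` (indexed by integers, so that it vanishes for
negative indices). -/
noncomputable def W (M : FinMatroid) (i j : ℤ) : ℕ :=
  ((M.flats ×ˢ M.flats).filter
    (fun p => p.1 ⊆ p.2 ∧ (M.rk p.1 : ℤ) = i ∧ (M.rk p.2 : ℤ) = j)).card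

/-- Doubly indexed Whitney number of the first kind: the sum of `μ(E,F)` over pairs of
flats with `rk E = i` and `rk F = j`. -/
noncomputable def w (M : FinMatroid) (i j : ℤ) : ℤ :=
  ∑ p ∈ (M.flats ×ˢ M.flats).filter
      (fun p => (M.rk p.1 : ℤ) = i ∧ (M.rk p.2 : ℤ) = j),
    M.mu p.1 p.2

end FinMatroid

attribute [reducible] FinMatroid.localization FinMatroid.restrictionAt

namespace FinMatroid

variable {M : FinMatroid}

lemma mem_flats {F : Finset M.E} : F ∈ M.flats ↔ M.IsFlat F := by
  simp [flats]

lemma univ_isFlat : M.IsFlat (Finset.univ : Finset M.E) :=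
  fun x hx => absurd (Finset.mem_univ x) hx

lemma univ_mem_flats : (Finset.univ : Finset M.E) ∈ M.flats := mem_flats.mpr univ_isFlat

lemma rk_le_rank (S : Finset M.E) : M.rk S ≤ M.rank := M.rk_mono (Finset.subset_univ S)

lemma eq_empty_of_rk_eq_zero (hM : M.Loopless) {S : Finset M.E} (h : M.rk S = 0) : S = ∅ := by
  by_contra hne
  obtain ⟨x, hx⟩ := Finset.nonempty_iff_ne_empty.mpr hne
  have h1 : M.rk {x} ≤ M.rk S := M.rk_mono (Finset.singleton_subset_iff.mpr hx)
  rw [hM x, h] at h1; omega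

lemma empty_isFlat (hM : M.Loopless) : M.IsFlat (∅ : Finset M.E) := by
  intro x _
  have : insert x (∅ : Finset M.E) = {x} := rfl
  rw [this, hM x, M.rk_empty]
  omega

lemma rk_lt_of_ssubset_of_isFlat {H G : Finset M.E} (hH : M.IsFlat H) (hss : H ⊂ G) :
    M.rk H < M.rk G := by
  obtain ⟨x, hxG, hxH⟩ := Finset.exists_of_ssubset hss
  have h1 := hH x hxH
  have h2 : M.rk H ≤ M.rk (insert x H) := M.rk_mono (Finset.subset_insert _ _)
  have h3 : M.rk (insert x H) ≤ M.rk G := M.rk_mono (Finset.insert_subset hxG hss.subset)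
  omega

lemma flat_eq_univ_of_rk_eq_rank {F : Finset M.E} (hF : M.IsFlat F) (h : M.rk F = M.rank) :
    F = Finset.univ := by
  by_contra hne
  have h2 := rk_lt_of_ssubset_of_isFlat hF (Finset.ssubset_univ_iff.mpr hne)
  have h3 : M.rk Finset.univ = M.rank := rfl
  omega

lemma mu_eq (A B : Finset M.E) : M.mu A B =
    if A = B then 1 else -∑ G ∈ M.flats.filter (fun G => A ⊆ G ∧ G ⊂ B), M.mu A G := by
  rw [mu]
  split
  · rfl
  · rw [Finset.sum_attach]

lemma mu_self (A : Finset M.E) : M.mu A A = 1 := by rw [mu_eq]; simp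

lemma mu_atom (hM : M.Loopless) {G : Finset M.E} (h1 : M.rk G = 1) : M.mu ∅ G = -1 := by
  have hGne : G ≠ ∅ := by
    intro h; rw [h, M.rk_empty] at h1; omega
  have hfil : M.flats.filter (fun H => ∅ ⊆ H ∧ H ⊂ G) = {∅} := by
    ext H
    simp only [Finset.mem_filter, Finset.mem_singleton, mem_flats, Finset.empty_subset,
      true_and]
    constructor
    · rintro ⟨hH, hss⟩
      have := rk_lt_of_ssubset_of_isFlat hH hss
      exact eq_empty_of_rk_eq_zero hM (by omega)
    · rintro rfl
      exact ⟨empty_isFlat hM, Finset.empty_ssubset.mpr (Finset.nonempty_iff_ne_empty.mpr hGne)⟩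
  rw [mu_eq, if_neg (fun h => hGne h.symm), hfil, Finset.sum_singleton, mu_self]

end FinMatroid

namespace FinMatroid

variable {M : FinMatroid}

lemma W_zero_eq (hM : M.Loopless) (j : ℤ) :
    M.W 0 j = (M.flats.filter (fun F => (M.rk F : ℤ) = j)).card := by
  unfold W
  apply Finset.card_bij (fun p _ => p.2)
  · rintro ⟨E, F⟩ hp
    simp only [Finset.mem_filter, Finset.mem_product] at hp ⊢
    exact ⟨hp.1.2, hp.2.2.2⟩
  · rintro ⟨E1, F1⟩ hp1 ⟨E2, F2⟩ hp2 h
    simp only [Finset.mem_filter, Finset.mem_product] at hp1 hp2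
    simp only at h
    have h1 : E1 = ∅ := eq_empty_of_rk_eq_zero hM (by exact_mod_cast hp1.2.2.1)
    have h2 : E2 = ∅ := eq_empty_of_rk_eq_zero hM (by exact_mod_cast hp2.2.2.1)
    simp [h1, h2, h]
  · intro F hF
    simp only [Finset.mem_filter] at hF
    refine ⟨(∅, F), ?_, rfl⟩
    simp only [Finset.mem_filter, Finset.mem_product]
    exact ⟨⟨mem_flats.mpr (empty_isFlat hM), hF.1⟩, Finset.empty_subset _,
      by simp [M.rk_empty], hF.2⟩

lemma w_zero_eq (hM : M.Loopless) (j : ℤ) :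
    M.w 0 j = ∑ F ∈ M.flats.filter (fun F => (M.rk F : ℤ) = j), M.mu ∅ F := by
  unfold w
  apply Finset.sum_bij (fun p _ => p.2)
  · rintro ⟨E, F⟩ hp
    simp only [Finset.mem_filter, Finset.mem_product] at hp ⊢
    exact ⟨hp.1.2, hp.2.2⟩
  · rintro ⟨E1, F1⟩ hp1 ⟨E2, F2⟩ hp2 h
    simp only [Finset.mem_filter, Finset.mem_product] at hp1 hp2
    simp only at h
    have h1 : E1 = ∅ := eq_empty_of_rk_eq_zero hM (by exact_mod_cast hp1.2.1)
    have h2 : E2 = ∅ := eq_empty_of_rk_eq_zero hM (by exact_mod_cast hp2.2.1)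
    simp [h1, h2, h]
  · intro F hF
    simp only [Finset.mem_filter] at hF
    refine ⟨(∅, F), ?_, rfl⟩
    simp only [Finset.mem_filter, Finset.mem_product]
    exact ⟨⟨mem_flats.mpr (empty_isFlat hM), hF.1⟩, by simp [M.rk_empty], hF.2⟩
  · rintro ⟨E, F⟩ hp
    simp only [Finset.mem_filter, Finset.mem_product] at hp
    have h1 : E = ∅ := eq_empty_of_rk_eq_zero hM (by exact_mod_cast hp.2.1)
    rw [h1]

lemma w_zero_zero (hM : M.Loopless) : M.w 0 0 = 1 := by
  rw [w_zero_eq hM]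
  have hfil : M.flats.filter (fun F => (M.rk F : ℤ) = 0) = {∅} := by
    ext F
    simp only [Finset.mem_filter, Finset.mem_singleton, mem_flats]
    constructor
    · rintro ⟨_, h⟩
      exact eq_empty_of_rk_eq_zero hM (by exact_mod_cast h)
    · rintro rfl
      exact ⟨empty_isFlat hM, by simp [M.rk_empty]⟩
  rw [hfil, Finset.sum_singleton, mu_self]

lemma w_zero_one (hM : M.Loopless) : M.w 0 1 = -(M.W 0 1 : ℤ) := by
  rw [w_zero_eq hM, W_zero_eq hM]
  have hval : ∀ F ∈ M.flats.filter (fun F => (M.rk F : ℤ) = 1), M.mu ∅ F = -1 := by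
    intro F hF
    simp only [Finset.mem_filter] at hF
    exact mu_atom hM (by exact_mod_cast hF.2)
  rw [Finset.sum_congr rfl hval, Finset.sum_const, nsmul_eq_mul]
  ring

lemma W_eq_zero {i j : ℤ} (h : j < 0 ∨ i < 0 ∨ j < i ∨ (M.rank : ℤ) < j) : M.W i j = 0 := by
  unfold W
  rw [Finset.card_eq_zero, Finset.eq_empty_iff_forall_notMem]
  rintro ⟨E, F⟩ hp
  simp only [Finset.mem_filter, Finset.mem_product] at hp
  have h1 : M.rk E ≤ M.rk F := M.rk_mono hp.2.1
  have h2 : M.rk F ≤ M.rank := rk_le_rank F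
  have h3 := hp.2.2.1
  have h4 := hp.2.2.2
  omega

lemma w_eq_zero {i j : ℤ} (h : j < 0 ∨ (M.rank : ℤ) < j ∨ i < 0 ∨ (M.rank : ℤ) < i) :
    M.w i j = 0 := by
  unfold w
  have hfil : (M.flats ×ˢ M.flats).filter
      (fun p => (M.rk p.1 : ℤ) = i ∧ (M.rk p.2 : ℤ) = j) = ∅ := by
    rw [Finset.eq_empty_iff_forall_notMem]
    rintro ⟨E, F⟩ hp
    simp only [Finset.mem_filter, Finset.mem_product] at hp
    have h1 : M.rk E ≤ M.rank := rk_le_rank E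
    have h2 : M.rk F ≤ M.rank := rk_le_rank F
    have h3 := hp.2.1
    have h4 := hp.2.2
    omega
  rw [hfil, Finset.sum_empty]

lemma charPoly_coeff (M : FinMatroid) (i : ℕ) :
    M.charPoly.coeff i
      = ∑ F ∈ M.flats.filter (fun F => (M.rk F : ℤ) = (M.rank : ℤ) - i), M.mu ∅ F := by
  unfold charPoly
  rw [Polynomial.finset_sum_coeff, Finset.sum_filter]
  apply Finset.sum_congr rfl
  intro F _
  rw [Polynomial.coeff_C_mul, Polynomial.coeff_X_pow]
  have h1 : M.rk F ≤ M.rank := rk_le_rank F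
  by_cases h : (M.rk F : ℤ) = (M.rank : ℤ) - i
  · have h2 : M.rank - M.rk F = i := by omega
    simp [h2, h]
  · have h2 : i ≠ M.rank - M.rk F := by omega
    simp [h2, h]

lemma charPoly_coeff_w (hM : M.Loopless) (i : ℕ) :
    M.charPoly.coeff i = M.w 0 ((M.rank : ℤ) - i) := by
  rw [charPoly_coeff, w_zero_eq hM]

end FinMatroid

namespace FinMatroid

variable {M : FinMatroid}

lemma localization_rk (F : Finset M.E) (S : Finset {x // x ∈ F}) :
    (M.localization F).rk S = M.rk (S.map (Function.Embedding.subtype _)) := rfl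

lemma restrictionAt_rk (F : Finset M.E) (S : Finset {x // x ∉ F}) :
    (M.restrictionAt F).rk S
      = M.rk (S.map (Function.Embedding.subtype _) ∪ F) - M.rk F := rfl

lemma localization_rank (F : Finset M.E) : (M.localization F).rank = M.rk F := by
  show M.rk ((Finset.univ : Finset {x // x ∈ F}).map (Function.Embedding.subtype _)) = M.rk F
  congr 1
  ext x
  simp [Function.Embedding.coe_subtype]

lemma restrictionAt_rank (F : Finset M.E) :
    (M.restrictionAt F).rank = M.rank - M.rk F := by
  show M.rk ((Finset.univ : Finset {x // x ∉ F}).map (Function.Embedding.subtype _) ∪ F)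
      - M.rk F = M.rank - M.rk F
  congr 2
  ext x
  simp only [Finset.mem_union, Finset.mem_map, Function.Embedding.coe_subtype, Finset.mem_univ,
    true_and, Subtype.exists, exists_prop, Finset.mem_univ, iff_true]
  by_cases h : x ∈ F
  · exact Or.inr h
  · exact Or.inl ⟨x, h, rfl⟩

lemma localization_loopless (hM : M.Loopless) (F : Finset M.E) :
    (M.localization F).Loopless := by
  intro x
  show M.rk (({x} : Finset {y // y ∈ F}).map (Function.Embedding.subtype _)) = 1
  rw [Finset.map_singleton]
  exact hM x.1

lemma restrictionAt_loopless {F : Finset M.E} (hF : M.IsFlat F) :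
    (M.restrictionAt F).Loopless := by
  intro x
  show M.rk (({x} : Finset {y // y ∉ F}).map (Function.Embedding.subtype _) ∪ F) - M.rk F = 1
  rw [Finset.map_singleton]
  have h1 : ({(Function.Embedding.subtype (fun y => y ∉ F)) x} : Finset M.E) ∪ F
      = insert x.1 F := by
    ext y
    simp [Function.Embedding.coe_subtype]
  rw [h1]
  have h2 := hF x.1 x.2
  have h3 := M.rk_insert_le F x.1
  have h4 : M.rk F ≤ M.rk (insert x.1 F) := M.rk_mono (Finset.subset_insert _ _)
  omega

lemma map_subtype_subset {F : Finset M.E} (S : Finset {x // x ∈ F}) :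
    S.map (Function.Embedding.subtype _) ⊆ F := by
  intro y hy
  exact Finset.property_of_mem_map_subtype S hy

lemma isFlat_localization_iff {F : Finset M.E} (hF : M.IsFlat F) (S : Finset {x // x ∈ F}) :
    (M.localization F).IsFlat S ↔ M.IsFlat (S.map (Function.Embedding.subtype _)) := by
  constructor
  · intro h x hx
    by_cases hxF : x ∈ F
    · have hxS : (⟨x, hxF⟩ : {y // y ∈ F}) ∉ S := by
        intro hc
        exact hx (Finset.mem_map_of_mem _ hc)
      have h2 := h ⟨x, hxF⟩ hxS
      rw [localization_rk, localization_rk, Finset.map_insert] at h2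
      exact h2
    · intro heq
      have hsub : S.map (Function.Embedding.subtype _) ⊆ F := map_subtype_subset S
      have h1 : F ∪ insert x (S.map (Function.Embedding.subtype _)) = insert x F := by
        rw [Finset.union_insert, Finset.union_eq_left.mpr hsub]
      have h2 : F ∩ insert x (S.map (Function.Embedding.subtype _))
          = S.map (Function.Embedding.subtype _) := by
        ext y
        simp only [Finset.mem_inter, Finset.mem_insert]
        constructor
        · rintro ⟨hyF, hy | hy⟩
          · exact absurd (hy ▸ hyF) hxF
          · exact hy
        · intro hy
          exact ⟨hsub hy, Or.inr hy⟩
      have h3 := M.rk_submod F (insert x (S.map (Function.Embedding.subtype _)))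
      rw [h1, h2] at h3
      have h4 : M.rk F ≤ M.rk (insert x F) := M.rk_mono (Finset.subset_insert _ _)
      have h5 := hF x hxF
      omega
  · intro h x hx
    have hxm : x.1 ∉ S.map (Function.Embedding.subtype _) := by
      intro hc
      rw [Finset.mem_map] at hc
      obtain ⟨y, hy, hyx⟩ := hc
      have hyex : y = x := Subtype.ext (by simpa using hyx)
      exact hx (hyex ▸ hy)
    have h2 := h x.1 hxm
    rw [localization_rk, localization_rk, Finset.map_insert]
    exact h2

lemma flats_localization {F : Finset M.E} (hF : M.IsFlat F) :
    (M.localization F).flats.map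
        (Finset.mapEmbedding (Function.Embedding.subtype (· ∈ F))).toEmbedding
      = M.flats.filter (fun G => G ⊆ F) := by
  ext G
  simp only [Finset.mem_map, Finset.mem_filter, mem_flats, RelEmbedding.coe_toEmbedding,
    Finset.mapEmbedding_apply]
  constructor
  · rintro ⟨S, hS, rfl⟩
    exact ⟨(isFlat_localization_iff hF S).mp (mem_flats.mp hS), map_subtype_subset S⟩
  · rintro ⟨hG, hGF⟩
    refine ⟨G.subtype (· ∈ F), ?_, ?_⟩
    · rw [mem_flats, isFlat_localization_iff hF, Finset.subtype_map,
        Finset.filter_true_of_mem (fun x hx => hGF hx)]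
      exact hG
    · rw [Finset.subtype_map, Finset.filter_true_of_mem (fun x hx => hGF hx)]

theorem mu_localization (M : FinMatroid) {F : Finset M.E} (hF : M.IsFlat F)
    (A B : Finset {x // x ∈ F}) :
    (M.localization F).mu A B
      = M.mu (A.map (Function.Embedding.subtype _)) (B.map (Function.Embedding.subtype _)) := by
  rw [mu_eq, mu_eq]
  by_cases hAB : A = B
  · rw [if_pos hAB, if_pos (by rw [hAB])]
  · rw [if_neg hAB, if_neg (fun h => hAB (Finset.map_injective _ h))]
    congr 1
    have hidx : M.flats.filter (fun G => A.map (Function.Embedding.subtype _) ⊆ G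
          ∧ G ⊂ B.map (Function.Embedding.subtype _))
        = ((M.localization F).flats.filter (fun S => A ⊆ S ∧ S ⊂ B)).map
            (Finset.mapEmbedding (Function.Embedding.subtype (· ∈ F))).toEmbedding := by
      rw [Finset.map_filter']
      rw [flats_localization hF]
      rw [Finset.filter_filter]
      apply Finset.filter_congr
      intro G hG
      simp only [RelEmbedding.coe_toEmbedding]
      constructor
      · rintro ⟨h1, h2⟩
        have hGF : G ⊆ F := (h2.subset).trans (map_subtype_subset B)
        refine ⟨hGF, G.subtype (· ∈ F), ?_, ?_⟩
        · have hmap : (G.subtype (· ∈ F)).map (Function.Embedding.subtype _) = G := by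
            rw [Finset.subtype_map, Finset.filter_true_of_mem (fun x hx => hGF hx)]
          constructor
          · rw [← Finset.map_subset_map (f := Function.Embedding.subtype (· ∈ F)), hmap]
            exact h1
          · rw [← Finset.map_ssubset_map (f := Function.Embedding.subtype (· ∈ F)), hmap]
            exact h2
        · rw [Finset.mapEmbedding_apply, Finset.subtype_map,
            Finset.filter_true_of_mem (fun x hx => hGF hx)]
      · rintro ⟨hGF, S, ⟨hAS, hSB⟩, rfl⟩
        rw [Finset.mapEmbedding_apply]
        exact ⟨Finset.map_subset_map.mpr hAS, Finset.map_ssubset_map.mpr hSB⟩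
    rw [hidx, Finset.sum_map]
    apply Finset.sum_congr rfl
    intro S hS
    simp only [RelEmbedding.coe_toEmbedding, Finset.mapEmbedding_apply]
    exact mu_localization M hF A S
termination_by B.card
decreasing_by exact Finset.card_lt_card (Finset.mem_filter.mp hS).2.2

end FinMatroid

namespace FinMatroid

variable {M : FinMatroid}

lemma flats_localization_filter {F : Finset M.E} (hF : M.IsFlat F) (k : ℤ) :
    M.flats.filter (fun G => G ⊆ F ∧ (M.rk G : ℤ) = k)
      = ((M.localization F).flats.filter
          (fun S => ((M.localization F).rk S : ℤ) = k)).map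
          (Finset.mapEmbedding (Function.Embedding.subtype (· ∈ F))).toEmbedding := by
  ext G
  simp only [Finset.mem_filter, Finset.mem_map, RelEmbedding.coe_toEmbedding,
    Finset.mapEmbedding_apply, mem_flats]
  constructor
  · rintro ⟨hG, hGF, hrk⟩
    refine ⟨G.subtype (· ∈ F), ⟨?_, ?_⟩, ?_⟩
    · rw [mem_flats, isFlat_localization_iff hF, Finset.subtype_map,
        Finset.filter_true_of_mem (fun x hx => hGF hx)]
      exact hG
    · rw [localization_rk, Finset.subtype_map,
        Finset.filter_true_of_mem (fun x hx => hGF hx)]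
      exact hrk
    · rw [Finset.subtype_map, Finset.filter_true_of_mem (fun x hx => hGF hx)]
  · rintro ⟨S, ⟨hS, hrk⟩, rfl⟩
    exact ⟨(isFlat_localization_iff hF S).mp (mem_flats.mp hS), map_subtype_subset S, hrk⟩

lemma card_flats_localization {F : Finset M.E} (hF : M.IsFlat F) (k : ℤ) :
    ((M.localization F).flats.filter
        (fun S => ((M.localization F).rk S : ℤ) = k)).card
      = (M.flats.filter (fun G => G ⊆ F ∧ (M.rk G : ℤ) = k)).card := by
  rw [flats_localization_filter hF k, Finset.card_map]

lemma w_localization (hM : M.Loopless) {F : Finset M.E} (hF : M.IsFlat F) (k : ℤ) :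
    (M.localization F).w 0 k
      = ∑ G ∈ M.flats.filter (fun G => G ⊆ F ∧ (M.rk G : ℤ) = k), M.mu ∅ G := by
  rw [w_zero_eq (localization_loopless hM F), flats_localization_filter hF k,
    Finset.sum_map]
  apply Finset.sum_congr rfl
  intro S _
  simp only [RelEmbedding.coe_toEmbedding, Finset.mapEmbedding_apply]
  have h := mu_localization M hF ∅ S
  rw [Finset.map_empty] at h
  exact h

lemma W0k_localization (hM : M.Loopless) {F : Finset M.E} (hF : M.IsFlat F) (k : ℤ) :
    (M.localization F).W 0 k
      = (M.flats.filter (fun G => G ⊆ F ∧ (M.rk G : ℤ) = k)).card := by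
  rw [W_zero_eq (localization_loopless hM F)]
  exact card_flats_localization hF k

lemma isFlat_restrictionAt_iff {F : Finset M.E} (hF : M.IsFlat F) (S : Finset {x // x ∉ F}) :
    (M.restrictionAt F).IsFlat S
      ↔ M.IsFlat (S.map (Function.Embedding.subtype _) ∪ F) := by
  have hkey : ∀ (x : {y : M.E // y ∉ F}),
      (insert x S).map (Function.Embedding.subtype _) ∪ F
        = insert x.1 (S.map (Function.Embedding.subtype _) ∪ F) := by
    intro x
    rw [Finset.map_insert, Finset.insert_union]
    rfl
  constructor
  · intro h x hx
    rw [Finset.mem_union, not_or] at hx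
    obtain ⟨hxS, hxF⟩ := hx
    have hxSm : (⟨x, hxF⟩ : {y // y ∉ F}) ∉ S := by
      intro hc
      exact hxS (Finset.mem_map_of_mem _ hc)
    have h2 := h ⟨x, hxF⟩ hxSm
    rw [restrictionAt_rk, restrictionAt_rk, hkey ⟨x, hxF⟩,
      show ((⟨x, hxF⟩ : {y : M.E // y ∉ F}) : M.E) = x from rfl] at h2
    have h3 : M.rk F ≤ M.rk (S.map (Function.Embedding.subtype _) ∪ F) :=
      M.rk_mono Finset.subset_union_right
    have h4 : M.rk (S.map (Function.Embedding.subtype _) ∪ F)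
        ≤ M.rk (insert x (S.map (Function.Embedding.subtype _) ∪ F)) :=
      M.rk_mono (Finset.subset_insert _ _)
    omega
  · intro h x hx
    have hxm : x.1 ∉ S.map (Function.Embedding.subtype _) ∪ F := by
      rw [Finset.mem_union, not_or]
      refine ⟨?_, x.2⟩
      intro hc
      rw [Finset.mem_map] at hc
      obtain ⟨y, hy, hyx⟩ := hc
      have hyex : y = x := Subtype.ext (by simpa using hyx)
      exact hx (hyex ▸ hy)
    have h2 := h x.1 hxm
    rw [restrictionAt_rk, restrictionAt_rk, hkey x]
    have h3 : M.rk F ≤ M.rk (S.map (Function.Embedding.subtype _) ∪ F) :=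
      M.rk_mono Finset.subset_union_right
    have h4 : M.rk (S.map (Function.Embedding.subtype _) ∪ F)
        ≤ M.rk (insert x.1 (S.map (Function.Embedding.subtype _) ∪ F)) :=
      M.rk_mono (Finset.subset_insert _ _)
    omega

lemma card_flats_restrictionAt {F : Finset M.E} (hF : M.IsFlat F) (k : ℤ) :
    ((M.restrictionAt F).flats.filter
        (fun S => ((M.restrictionAt F).rk S : ℤ) = k)).card
      = (M.flats.filter (fun G => F ⊆ G ∧ (M.rk G : ℤ) = (M.rk F : ℤ) + k)).card := by
  have hmapeq : ∀ S : Finset {x : M.E // x ∉ F},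
      S.map (Function.Embedding.subtype _)
        = (S.map (Function.Embedding.subtype _) ∪ F).filter (· ∉ F) := by
    intro S
    ext y
    simp only [Finset.mem_filter, Finset.mem_union]
    constructor
    · intro hy
      exact ⟨Or.inl hy, Finset.property_of_mem_map_subtype S hy⟩
    · rintro ⟨hy | hy, hyF⟩
      · exact hy
      · exact absurd hy hyF
  apply Finset.card_bij (fun S _ => S.map (Function.Embedding.subtype _) ∪ F)
  · intro S hS
    simp only [Finset.mem_filter, mem_flats] at hS ⊢
    obtain ⟨hS1, hS2⟩ := hS
    have h3 : M.rk F ≤ M.rk (S.map (Function.Embedding.subtype _) ∪ F) :=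
      M.rk_mono Finset.subset_union_right
    refine ⟨(isFlat_restrictionAt_iff hF S).mp (mem_flats.mp hS1), Finset.subset_union_right, ?_⟩
    omega
  · intro S hS T hT h
    apply Finset.map_injective (Function.Embedding.subtype _)
    rw [hmapeq S, hmapeq T, h]
  · intro G hG
    simp only [Finset.mem_filter, mem_flats] at hG
    obtain ⟨hG1, hG2, hG3⟩ := hG
    refine ⟨G.subtype (· ∉ F), ?_, ?_⟩
    · have hpsi : (G.subtype (· ∉ F)).map (Function.Embedding.subtype _) ∪ F = G := by
        rw [Finset.subtype_map]
        ext y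
        simp only [Finset.mem_union, Finset.mem_filter]
        constructor
        · rintro (⟨hy, _⟩ | hy)
          · exact hy
          · exact hG2 hy
        · intro hy
          by_cases hyF : y ∈ F
          · exact Or.inr hyF
          · exact Or.inl ⟨hy, hyF⟩
      simp only [Finset.mem_filter, mem_flats]
      constructor
      · rw [mem_flats, isFlat_restrictionAt_iff hF, hpsi]
        exact hG1
      · rw [hpsi]
        have h4 : M.rk F ≤ M.rk G := M.rk_mono hG2
        omega
    · rw [Finset.subtype_map]
      ext y
      simp only [Finset.mem_union, Finset.mem_filter]
      constructor
      · rintro (⟨hy, _⟩ | hy)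
        · exact hy
        · exact hG2 hy
      · intro hy
        by_cases hyF : y ∈ F
        · exact Or.inr hyF
        · exact Or.inl ⟨hy, hyF⟩

lemma W0k_restriction (hM : M.Loopless) {F : Finset M.E} (hF : M.IsFlat F) (k : ℤ) :
    (M.restrictionAt F).W 0 k
      = (M.flats.filter (fun G => F ⊆ G ∧ (M.rk G : ℤ) = (M.rk F : ℤ) + k)).card := by
  rw [W_zero_eq (restrictionAt_loopless hF)]
  exact card_flats_restrictionAt hF k

lemma W_fiber_left (i j : ℤ) :
    M.W i j = ∑ F ∈ M.flats.filter (fun F => (M.rk F : ℤ) = i),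
      (M.flats.filter (fun G => F ⊆ G ∧ (M.rk G : ℤ) = j)).card := by
  unfold W
  rw [Finset.card_eq_sum_card_fiberwise (f := fun p => p.1)
      (t := M.flats.filter (fun F => (M.rk F : ℤ) = i))
      (by rintro ⟨E, G⟩ hp
          have hp' := Finset.mem_filter.mp hp
          exact Finset.mem_filter.mpr ⟨(Finset.mem_product.mp hp'.1).1, hp'.2.2.1⟩)]
  apply Finset.sum_congr rfl
  intro F hF
  simp only [Finset.mem_filter] at hF
  apply Finset.card_bij (fun p _ => p.2)
  · rintro ⟨E, G⟩ hp
    simp only [Finset.mem_filter, Finset.mem_product] at hp ⊢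
    obtain ⟨⟨⟨_, hGfl⟩, hsub, _, hrkG⟩, hEF⟩ := hp
    subst hEF
    exact ⟨hGfl, hsub, hrkG⟩
  · rintro ⟨E1, G1⟩ hp1 ⟨E2, G2⟩ hp2 h
    simp only [Finset.mem_filter, Finset.mem_product] at hp1 hp2
    simp only at h
    rw [Prod.ext_iff]
    exact ⟨hp1.2.trans hp2.2.symm, h⟩
  · intro G hG
    simp only [Finset.mem_filter] at hG
    refine ⟨(F, G), ?_, rfl⟩
    simp only [Finset.mem_filter, Finset.mem_product]
    exact ⟨⟨⟨hF.1, hG.1⟩, hG.2.1, hF.2, hG.2.2⟩, trivial⟩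

lemma W_fiber_right (i j : ℤ) :
    M.W i j = ∑ F ∈ M.flats.filter (fun F => (M.rk F : ℤ) = j),
      (M.flats.filter (fun G => G ⊆ F ∧ (M.rk G : ℤ) = i)).card := by
  unfold W
  rw [Finset.card_eq_sum_card_fiberwise (f := fun p => p.2)
      (t := M.flats.filter (fun F => (M.rk F : ℤ) = j))
      (by rintro ⟨E, G⟩ hp
          have hp' := Finset.mem_filter.mp hp
          exact Finset.mem_filter.mpr ⟨(Finset.mem_product.mp hp'.1).2, hp'.2.2.2⟩)]
  apply Finset.sum_congr rfl
  intro F hF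
  simp only [Finset.mem_filter] at hF
  apply Finset.card_bij (fun p _ => p.1)
  · rintro ⟨E, G⟩ hp
    simp only [Finset.mem_filter, Finset.mem_product] at hp ⊢
    obtain ⟨⟨⟨hEfl, _⟩, hsub, hrkE, _⟩, hGF⟩ := hp
    subst hGF
    exact ⟨hEfl, hsub, hrkE⟩
  · rintro ⟨E1, G1⟩ hp1 ⟨E2, G2⟩ hp2 h
    simp only [Finset.mem_filter, Finset.mem_product] at hp1 hp2
    simp only at h
    rw [Prod.ext_iff]
    exact ⟨h, hp1.2.trans hp2.2.symm⟩
  · intro E hE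
    simp only [Finset.mem_filter] at hE
    refine ⟨(E, F), ?_, rfl⟩
    simp only [Finset.mem_filter, Finset.mem_product]
    exact ⟨⟨⟨hE.1, hF.1⟩, hE.2.1, hE.2.2, hF.2⟩, trivial⟩

lemma filter_rank_top : M.flats.filter (fun F => (M.rk F : ℤ) = (M.rank : ℤ))
    = {Finset.univ} := by
  ext F
  simp only [Finset.mem_filter, Finset.mem_singleton, mem_flats]
  constructor
  · rintro ⟨hF, h⟩
    exact flat_eq_univ_of_rk_eq_rank hF (by exact_mod_cast h)
  · rintro rfl
    exact ⟨univ_isFlat, rfl⟩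

end FinMatroid

namespace FinMatroid

variable {M : FinMatroid}

lemma natDegree_P_le (P : FinMatroid → Polynomial ℤ) (hP : IsKLFamily P)
    (M : FinMatroid) (hM : M.Loopless) : (P M).natDegree ≤ M.rank := by
  rcases Nat.eq_zero_or_pos M.rank with h0 | hpos
  · rw [hP.1 M hM h0]
    simp [h0]
  · apply Polynomial.natDegree_le_iff_coeff_eq_zero.mpr
    intro N hN
    exact hP.2.1 M hM hpos N (by omega)

theorem reflect_P_eq (P : FinMatroid → Polynomial ℤ) (hP : IsKLFamily P)
    (M : FinMatroid) (hM : M.Loopless) :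
    Polynomial.reflect M.rank (P M)
      = ∑ F ∈ M.flats, (M.localization F).charPoly * P (M.restrictionAt F) := by
  have hinj : Function.Injective
      (Polynomial.map (Int.castRingHom ℚ) : Polynomial ℤ → Polynomial ℚ) :=
    Polynomial.map_injective _ Int.cast_injective
  apply hinj
  apply Polynomial.eq_of_infinite_eval_eq
  apply Set.Infinite.mono (s := {q : ℚ | q ≠ 0})
  swap
  · have h2 := (Set.finite_singleton (0 : ℚ)).infinite_compl
    have he : {q : ℚ | q ≠ 0} = ({0} : Set ℚ)ᶜ := by
      ext q; simp
    rw [he]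
    exact h2
  intro q hq
  simp only [Set.mem_setOf_eq] at hq
  simp only [Set.mem_setOf_eq]
  have hPdeg : ((P M).map (Int.castRingHom ℚ)).natDegree ≤ M.rank :=
    le_trans Polynomial.natDegree_map_le (natDegree_P_le P hP M hM)
  letI : Invertible (q⁻¹) := invertibleOfNonzero (inv_ne_zero hq)
  have key := Polynomial.eval₂_reflect_mul_pow (RingHom.id ℚ) (q⁻¹) M.rank
    ((P M).map (Int.castRingHom ℚ)) hPdeg
  rw [invOf_eq_inv, inv_inv] at key
  simp only [Polynomial.eval₂_eq_eval_map, Polynomial.map_id] at key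
  have hqd : (q : ℚ) ^ M.rank ≠ 0 := pow_ne_zero _ hq
  have key2 : (Polynomial.reflect M.rank ((P M).map (Int.castRingHom ℚ))).eval q
      = ((P M).map (Int.castRingHom ℚ)).eval q⁻¹ * q ^ M.rank := by
    rw [← key, inv_pow, mul_assoc, inv_mul_cancel₀ hqd, mul_one]
  have h3 := hP.2.2 M hM q hq
  simp only [Polynomial.aeval_def, Polynomial.eval₂_eq_eval_map, algebraMap_int_eq] at h3
  rw [← Polynomial.reflect_map, key2, mul_comm, h3,
    Polynomial.eval_map, Polynomial.eval₂_finset_sum]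
  apply Finset.sum_congr rfl
  intro F _
  rw [Polynomial.eval₂_mul, Polynomial.eval₂_eq_eval_map, Polynomial.eval₂_eq_eval_map]

lemma coeff_P_eq (P : FinMatroid → Polynomial ℤ) (hP : IsKLFamily P)
    (M : FinMatroid) (hM : M.Loopless) {k : ℕ} (hk : k ≤ M.rank) :
    (P M).coeff k = ∑ F ∈ M.flats,
      ((M.localization F).charPoly * P (M.restrictionAt F)).coeff (M.rank - k) := by
  have h := reflect_P_eq P hP M hM
  have h2 := congrArg (fun p => Polynomial.coeff p (M.rank - k)) h
  rw [Polynomial.coeff_reflect,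
    Polynomial.revAt_le (by omega : M.rank - k ≤ M.rank),
    show M.rank - (M.rank - k) = k by omega] at h2
  rw [h2, Polynomial.finset_sum_coeff]

lemma prod_coeff (P : FinMatroid → Polynomial ℤ) (M : FinMatroid) (F : Finset M.E) (m : ℕ) :
    ((M.localization F).charPoly * P (M.restrictionAt F)).coeff m
      = ∑ k ∈ Finset.range (m + 1),
          (M.localization F).charPoly.coeff k * (P (M.restrictionAt F)).coeff (m - k) := by
  rw [Polynomial.coeff_mul, Finset.Nat.sum_antidiagonal_eq_sum_range_succ_mk]

lemma coeff_P_restriction_eq_zero (P : FinMatroid → Polynomial ℤ) (hP : IsKLFamily P)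
    {M : FinMatroid} (hM : M.Loopless) {F : Finset M.E} (hF : F ∈ M.flats)
    (hFr : M.rk F < M.rank) {j : ℕ} (hj : M.rank - M.rk F ≤ 2 * j) :
    (P (M.restrictionAt F)).coeff j = 0 := by
  apply hP.2.1 _ (restrictionAt_loopless (mem_flats.mp hF))
  · rw [restrictionAt_rank]; omega
  · rw [restrictionAt_rank]; omega

lemma P_restriction_univ (P : FinMatroid → Polynomial ℤ) (hP : IsKLFamily P)
    (M : FinMatroid) : P (M.restrictionAt Finset.univ) = 1 := by
  apply hP.1 _ (restrictionAt_loopless univ_isFlat)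
  rw [restrictionAt_rank]
  have : M.rk Finset.univ = M.rank := rfl
  omega

lemma charPoly_loc_coeff (hM : M.Loopless) (F : Finset M.E) (i : ℕ) :
    (M.localization F).charPoly.coeff i = (M.localization F).w 0 ((M.rk F : ℤ) - i) := by
  rw [charPoly_coeff_w (localization_loopless hM F), localization_rank]

lemma coeff_P_zero (P : FinMatroid → Polynomial ℤ) (hP : IsKLFamily P)
    (M : FinMatroid) (hM : M.Loopless) : (P M).coeff 0 = 1 := by
  rcases Nat.eq_zero_or_pos M.rank with h0 | hpos
  · rw [hP.1 M hM h0]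
    simp
  · rw [coeff_P_eq P hP M hM (Nat.zero_le _), Nat.sub_zero]
    have hterm : ∀ F ∈ M.flats,
        ((M.localization F).charPoly * P (M.restrictionAt F)).coeff M.rank
          = if (M.rk F : ℤ) = (M.rank : ℤ) then (1 : ℤ) else 0 := by
      intro F hF
      by_cases hr : (M.rk F : ℤ) = (M.rank : ℤ)
      · have hFu : F = Finset.univ :=
          flat_eq_univ_of_rk_eq_rank (mem_flats.mp hF) (by exact_mod_cast hr)
        subst hFu
        rw [if_pos hr, prod_coeff, P_restriction_univ P hP M]
        rw [Finset.sum_eq_single M.rank]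
        · rw [Nat.sub_self, charPoly_loc_coeff hM]
          have hru : M.rk Finset.univ = M.rank := rfl
          rw [show (M.rk (Finset.univ : Finset M.E) : ℤ) - (M.rank : ℕ) = 0 by
            rw [hru]; ring]
          rw [w_zero_zero (localization_loopless hM _)]
          simp
        · intro b hb hbne
          rw [Finset.mem_range] at hb
          have : (1 : Polynomial ℤ).coeff (M.rank - b) = 0 := by
            rw [Polynomial.coeff_one]
            simp only [ite_eq_right_iff]
            intro hc
            omega
          rw [this, mul_zero]
        · intro hd
          exact absurd (Finset.mem_range.mpr (by omega)) hd
      · rw [if_neg hr, prod_coeff]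
        apply Finset.sum_eq_zero
        intro k hk
        have hFr : M.rk F < M.rank := by
          have := rk_le_rank F
          have : (M.rk F : ℤ) ≤ (M.rank : ℤ) := by exact_mod_cast this
          omega
        by_cases hkr : k ≤ M.rk F
        · have hz : (P (M.restrictionAt F)).coeff (M.rank - k) = 0 :=
            coeff_P_restriction_eq_zero P hP hM hF hFr (by omega)
          rw [hz, mul_zero]
        · have hz : (M.localization F).charPoly.coeff k = 0 := by
            rw [charPoly_loc_coeff hM]
            apply w_eq_zero
            left
            omega
          rw [hz, zero_mul]
    rw [Finset.sum_congr rfl hterm, ← Finset.sum_filter, filter_rank_top,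
      Finset.sum_singleton]

end FinMatroid

namespace FinMatroid

variable {M : FinMatroid}

lemma w_localization_univ (hM : M.Loopless) (k : ℤ) :
    (M.localization Finset.univ).w 0 k = M.w 0 k := by
  rw [w_localization hM univ_isFlat k, w_zero_eq hM]
  apply Finset.sum_congr _ (fun _ _ => rfl)
  apply Finset.filter_congr
  intro G _
  simp [Finset.subset_univ]

lemma coeff_P_one (P : FinMatroid → Polynomial ℤ) (hP : IsKLFamily P)
    (M : FinMatroid) (hM : M.Loopless) (h1 : 1 ≤ M.rank) :
    (P M).coeff 1 = (M.W 0 ((M.rank : ℤ) - 1) : ℤ) - (M.W 0 1 : ℤ) := by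
  rw [coeff_P_eq P hP M hM h1]
  have hterm : ∀ F ∈ M.flats,
      ((M.localization F).charPoly * P (M.restrictionAt F)).coeff (M.rank - 1)
        = (if (M.rk F : ℤ) = (M.rank : ℤ) then -(M.W 0 1 : ℤ) else 0)
          + (if (M.rk F : ℤ) = (M.rank : ℤ) - 1 then 1 else 0) := by
    intro F hF
    have hrkle : M.rk F ≤ M.rank := rk_le_rank F
    by_cases hr1 : (M.rk F : ℤ) = (M.rank : ℤ)
    · have hFu : F = Finset.univ :=
        flat_eq_univ_of_rk_eq_rank (mem_flats.mp hF) (by exact_mod_cast hr1)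
      subst hFu
      rw [if_pos hr1, if_neg (by omega), add_zero, prod_coeff,
        P_restriction_univ P hP M]
      rw [Finset.sum_eq_single (M.rank - 1)]
      · rw [Nat.sub_self, charPoly_loc_coeff hM]
        have hru : M.rk (Finset.univ : Finset M.E) = M.rank := rfl
        rw [show (M.rk (Finset.univ : Finset M.E) : ℤ) - ((M.rank - 1 : ℕ) : ℤ) = 1 by
          rw [hru]; push_cast [h1]; ring]
        rw [w_localization_univ hM, w_zero_one hM]
        simp
      · intro b hb hbne
        rw [Finset.mem_range] at hb
        have hz : (1 : Polynomial ℤ).coeff (M.rank - 1 - b) = 0 := by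
          rw [Polynomial.coeff_one]
          simp only [ite_eq_right_iff]
          intro hc
          omega
        rw [hz, mul_zero]
      · intro hd
        exact absurd (Finset.mem_range.mpr (by omega)) hd
    · by_cases hr2 : (M.rk F : ℤ) = (M.rank : ℤ) - 1
      · rw [if_neg hr1, if_pos hr2, zero_add, prod_coeff]
        rw [Finset.sum_eq_single (M.rank - 1)]
        · rw [Nat.sub_self, charPoly_loc_coeff hM,
            coeff_P_zero P hP _ (restrictionAt_loopless (mem_flats.mp hF))]
          rw [show (M.rk F : ℤ) - ((M.rank - 1 : ℕ) : ℤ) = 0 by push_cast [h1]; omega]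
          rw [w_zero_zero (localization_loopless hM F)]
          ring
        · intro b hb hbne
          rw [Finset.mem_range] at hb
          have hz : (P (M.restrictionAt F)).coeff (M.rank - 1 - b) = 0 :=
            coeff_P_restriction_eq_zero P hP hM hF (by omega) (by omega)
          rw [hz, mul_zero]
        · intro hd
          exact absurd (Finset.mem_range.mpr (by omega)) hd
      · rw [if_neg hr1, if_neg hr2, add_zero, prod_coeff]
        apply Finset.sum_eq_zero
        intro k hk
        rw [Finset.mem_range] at hk
        have hFr : M.rk F < M.rank := by omega
        by_cases hkr : k ≤ M.rk F
        · have hz : (P (M.restrictionAt F)).coeff (M.rank - 1 - k) = 0 :=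
            coeff_P_restriction_eq_zero P hP hM hF hFr (by omega)
          rw [hz, mul_zero]
        · have hz : (M.localization F).charPoly.coeff k = 0 := by
            rw [charPoly_loc_coeff hM]
            apply w_eq_zero
            left
            omega
          rw [hz, zero_mul]
  rw [Finset.sum_congr rfl hterm, Finset.sum_add_distrib, ← Finset.sum_filter,
    ← Finset.sum_filter, filter_rank_top, Finset.sum_singleton,
    Finset.sum_const, W_zero_eq hM ((M.rank : ℤ) - 1)]
  push_cast
  ring

end FinMatroid

namespace FinMatroid

variable {M : FinMatroid}

lemma sum_W01_localization (hM : M.Loopless) (j : ℤ) :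
    ∑ F ∈ M.flats.filter (fun F => (M.rk F : ℤ) = j), ((M.localization F).W 0 1 : ℤ)
      = (M.W 1 j : ℤ) := by
  have h := W_fiber_right (M := M) 1 j
  calc ∑ F ∈ M.flats.filter (fun F => (M.rk F : ℤ) = j), ((M.localization F).W 0 1 : ℤ)
      = ∑ F ∈ M.flats.filter (fun F => (M.rk F : ℤ) = j),
          ((M.flats.filter (fun G => G ⊆ F ∧ (M.rk G : ℤ) = 1)).card : ℤ) := by
        apply Finset.sum_congr rfl
        intro F hF
        rw [Finset.mem_filter] at hF
        rw [W0k_localization hM (mem_flats.mp hF.1) 1]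
    _ = (M.W 1 j : ℤ) := by
        rw [h]
        push_cast
        rfl

lemma sum_W_restriction (hM : M.Loopless) (i k j : ℤ) (hik : i + k = j) :
    ∑ F ∈ M.flats.filter (fun F => (M.rk F : ℤ) = i), ((M.restrictionAt F).W 0 k : ℤ)
      = (M.W i j : ℤ) := by
  have h := W_fiber_left (M := M) i j
  calc ∑ F ∈ M.flats.filter (fun F => (M.rk F : ℤ) = i), ((M.restrictionAt F).W 0 k : ℤ)
      = ∑ F ∈ M.flats.filter (fun F => (M.rk F : ℤ) = i),
          ((M.flats.filter (fun G => F ⊆ G ∧ (M.rk G : ℤ) = j)).card : ℤ) := by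
        apply Finset.sum_congr rfl
        intro F hF
        rw [Finset.mem_filter] at hF
        rw [W0k_restriction hM (mem_flats.mp hF.1) k]
        have hfe : M.flats.filter (fun G => F ⊆ G ∧ (M.rk G : ℤ) = (M.rk F : ℤ) + k)
            = M.flats.filter (fun G => F ⊆ G ∧ (M.rk G : ℤ) = j) := by
          apply Finset.filter_congr
          intro G _
          rw [hF.2]
          simp [hik]
        rw [hfe]
    _ = (M.W i j : ℤ) := by
        rw [h]
        push_cast
        rfl

lemma coeff_P_two_rank5 (P : FinMatroid → Polynomial ℤ) (hP : IsKLFamily P)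
    (M : FinMatroid) (hM : M.Loopless) (h5 : M.rank = 5) :
    (P M).coeff 2
      = M.w 0 2 - (M.W 1 4 : ℤ) + (M.W 0 3 : ℤ) + (M.W 2 4 : ℤ) - (M.W 2 3 : ℤ) := by
  rw [coeff_P_eq P hP M hM (by omega)]
  have hterm : ∀ F ∈ M.flats,
      ((M.localization F).charPoly * P (M.restrictionAt F)).coeff (M.rank - 2)
        = (if (M.rk F : ℤ) = (M.rank : ℤ) then M.w 0 2 else 0)
          + (if (M.rk F : ℤ) = 4 then -((M.localization F).W 0 1 : ℤ) else 0)
          + (if (M.rk F : ℤ) = 3 then 1 else 0)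
          + (if (M.rk F : ℤ) = 2 then
              ((M.restrictionAt F).W 0 2 : ℤ) - ((M.restrictionAt F).W 0 1 : ℤ) else 0) := by
    intro F hF
    have hrkle : M.rk F ≤ M.rank := rk_le_rank F
    by_cases hr5 : (M.rk F : ℤ) = (M.rank : ℤ)
    · have hFu : F = Finset.univ :=
        flat_eq_univ_of_rk_eq_rank (mem_flats.mp hF) (by exact_mod_cast hr5)
      subst hFu
      rw [if_pos hr5, if_neg (by omega), if_neg (by omega), if_neg (by omega),
        prod_coeff, P_restriction_univ P hP M]
      rw [Finset.sum_eq_single 3]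
      · rw [show M.rank - 2 - 3 = 0 by omega, charPoly_loc_coeff hM]
        have hru : M.rk (Finset.univ : Finset M.E) = M.rank := rfl
        rw [show (M.rk (Finset.univ : Finset M.E) : ℤ) - (3 : ℕ) = 2 by
          rw [hru]; omega]
        rw [w_localization_univ hM]
        simp
      · intro b hb hbne
        rw [Finset.mem_range] at hb
        have hz : (1 : Polynomial ℤ).coeff (M.rank - 2 - b) = 0 := by
          rw [Polynomial.coeff_one]
          simp only [ite_eq_right_iff]
          intro hc
          omega
        rw [hz, mul_zero]
      · intro hd
        exact absurd (Finset.mem_range.mpr (by omega)) hd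
    · by_cases hr4 : (M.rk F : ℤ) = 4
      · rw [if_neg hr5, if_pos hr4, if_neg (by omega), if_neg (by omega),
          prod_coeff]
        rw [Finset.sum_eq_single 3]
        · rw [show M.rank - 2 - 3 = 0 by omega, charPoly_loc_coeff hM,
            coeff_P_zero P hP _ (restrictionAt_loopless (mem_flats.mp hF))]
          rw [show (M.rk F : ℤ) - (3 : ℕ) = 1 by omega]
          rw [w_zero_one (localization_loopless hM F)]
          ring
        · intro b hb hbne
          rw [Finset.mem_range] at hb
          have hz : (P (M.restrictionAt F)).coeff (M.rank - 2 - b) = 0 :=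
            coeff_P_restriction_eq_zero P hP hM hF (by omega) (by omega)
          rw [hz, mul_zero]
        · intro hd
          exact absurd (Finset.mem_range.mpr (by omega)) hd
      · by_cases hr3 : (M.rk F : ℤ) = 3
        · rw [if_neg hr5, if_neg (by omega), if_pos hr3, if_neg (by omega),
            prod_coeff]
          rw [Finset.sum_eq_single 3]
          · rw [show M.rank - 2 - 3 = 0 by omega, charPoly_loc_coeff hM,
              coeff_P_zero P hP _ (restrictionAt_loopless (mem_flats.mp hF))]
            rw [show (M.rk F : ℤ) - (3 : ℕ) = 0 by omega]
            rw [w_zero_zero (localization_loopless hM F)]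
            ring
          · intro b hb hbne
            rw [Finset.mem_range] at hb
            have hz : (P (M.restrictionAt F)).coeff (M.rank - 2 - b) = 0 :=
              coeff_P_restriction_eq_zero P hP hM hF (by omega) (by omega)
            rw [hz, mul_zero]
          · intro hd
            exact absurd (Finset.mem_range.mpr (by omega)) hd
        · by_cases hr2 : (M.rk F : ℤ) = 2
          · rw [if_neg hr5, if_neg (by omega), if_neg (by omega), if_pos hr2,
              prod_coeff]
            rw [Finset.sum_eq_single 2]
            · rw [show M.rank - 2 - 2 = 1 by omega, charPoly_loc_coeff hM]
              rw [show (M.rk F : ℤ) - (2 : ℕ) = 0 by omega]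
              rw [w_zero_zero (localization_loopless hM F)]
              rw [coeff_P_one P hP _ (restrictionAt_loopless (mem_flats.mp hF))
                (by rw [restrictionAt_rank]; omega)]
              rw [show (((M.restrictionAt F).rank : ℤ) - 1) = 2 by
                rw [restrictionAt_rank]; omega]
              ring
            · intro b hb hbne
              rw [Finset.mem_range] at hb
              by_cases hb3 : b = 3
              · subst hb3
                have hz : (M.localization F).charPoly.coeff 3 = 0 := by
                  rw [charPoly_loc_coeff hM]
                  apply w_eq_zero
                  left
                  omega
                rw [hz, zero_mul]
              · have hz : (P (M.restrictionAt F)).coeff (M.rank - 2 - b) = 0 :=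
                  coeff_P_restriction_eq_zero P hP hM hF (by omega) (by omega)
                rw [hz, mul_zero]
            · intro hd
              exact absurd (Finset.mem_range.mpr (by omega)) hd
          · rw [if_neg hr5, if_neg (by omega), if_neg (by omega), if_neg (by omega),
              prod_coeff]
            simp only [add_zero]
            apply Finset.sum_eq_zero
            intro k hk
            rw [Finset.mem_range] at hk
            have hrkpos : (0 : ℤ) ≤ (M.rk F : ℤ) := Int.natCast_nonneg _
            by_cases hkr : k ≤ M.rk F
            · have hz : (P (M.restrictionAt F)).coeff (M.rank - 2 - k) = 0 :=
                coeff_P_restriction_eq_zero P hP hM hF (by omega) (by omega)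
              rw [hz, mul_zero]
            · have hz : (M.localization F).charPoly.coeff k = 0 := by
                rw [charPoly_loc_coeff hM]
                apply w_eq_zero
                left
                omega
              rw [hz, zero_mul]
  rw [Finset.sum_congr rfl hterm]
  rw [Finset.sum_add_distrib, Finset.sum_add_distrib, Finset.sum_add_distrib]
  rw [← Finset.sum_filter, ← Finset.sum_filter, ← Finset.sum_filter, ← Finset.sum_filter]
  rw [filter_rank_top, Finset.sum_singleton]
  have hp2 : ∑ F ∈ M.flats.filter (fun F => (M.rk F : ℤ) = 4),
      (-((M.localization F).W 0 1 : ℤ)) = -(M.W 1 4 : ℤ) := by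
    rw [Finset.sum_neg_distrib, sum_W01_localization hM 4]
  have hp3 : ∑ F ∈ M.flats.filter (fun F => (M.rk F : ℤ) = 3), (1 : ℤ)
      = (M.W 0 3 : ℤ) := by
    rw [Finset.sum_const, W_zero_eq hM 3, nsmul_eq_mul, mul_one]
  have hp4 : ∑ F ∈ M.flats.filter (fun F => (M.rk F : ℤ) = 2),
      (((M.restrictionAt F).W 0 2 : ℤ) - ((M.restrictionAt F).W 0 1 : ℤ))
      = (M.W 2 4 : ℤ) - (M.W 2 3 : ℤ) := by
    rw [Finset.sum_sub_distrib, sum_W_restriction hM 2 2 4 (by ring),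
      sum_W_restriction hM 2 1 3 (by ring)]
  rw [hp2, hp3, hp4]
  ring

end FinMatroid

/-- A formula for the cubic coefficient of the Kazhdan–Lusztig
polynomial of a loopless matroid `M` of rank `d`, in terms of doubly indexed Whitney
numbers of `M` and of its localizations `M_F` and restrictions `M^F`. -/
theorem kl_cubic_coeff (P : FinMatroid → Polynomial ℤ)
    (hP : FinMatroid.IsKLFamily P) (M : FinMatroid) (hM : M.Loopless) :
    (P M).coeff 3 =
      M.w 0 3 - (M.W ((M.rank : ℤ) - 4) ((M.rank : ℤ) - 3) : ℤ)
        + (M.W ((M.rank : ℤ) - 4) ((M.rank : ℤ) - 1) : ℤ)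
        - (M.W 1 ((M.rank : ℤ) - 2) : ℤ) + (M.W 0 ((M.rank : ℤ) - 3) : ℤ)
      + ∑ F ∈ M.flats.filter (fun F => (M.rk F : ℤ) = (M.rank : ℤ) - 1),
          (M.localization F).w 0 2
      - ∑ F ∈ M.flats.filter (fun F => (M.rk F : ℤ) = (M.rank : ℤ) - 3),
          ((M.localization F).W 0 1 : ℤ) *
            (((M.restrictionAt F).W 0 2 : ℤ) - ((M.restrictionAt F).W 0 1 : ℤ))
      + ∑ F ∈ M.flats.filter (fun F => (M.rk F : ℤ) = (M.rank : ℤ) - 5),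
          ((M.restrictionAt F).w 0 2 - ((M.restrictionAt F).W 1 4 : ℤ)
            + ((M.restrictionAt F).W 0 3 : ℤ) + ((M.restrictionAt F).W 2 4 : ℤ)
            - ((M.restrictionAt F).W 2 3 : ℤ)) := by
  open FinMatroid in
  rcases lt_or_ge M.rank 3 with hd | hd
  · -- small rank: both sides vanish
    have hL : (P M).coeff 3 = 0 := by
      rcases Nat.eq_zero_or_pos M.rank with h0 | hpos
      · rw [hP.1 M hM h0, Polynomial.coeff_one]
        norm_num
      · exact hP.2.1 M hM hpos 3 (by omega)
    have hw03 : M.w 0 3 = 0 := w_eq_zero (by omega)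
    have hW1 : M.W ((M.rank : ℤ) - 4) ((M.rank : ℤ) - 3) = 0 := W_eq_zero (by omega)
    have hW2 : M.W ((M.rank : ℤ) - 4) ((M.rank : ℤ) - 1) = 0 := W_eq_zero (by omega)
    have hW3 : M.W 1 ((M.rank : ℤ) - 2) = 0 := W_eq_zero (by omega)
    have hW4 : M.W 0 ((M.rank : ℤ) - 3) = 0 := W_eq_zero (by omega)
    have hS1 : ∑ F ∈ M.flats.filter (fun F => (M.rk F : ℤ) = (M.rank : ℤ) - 1),
        (M.localization F).w 0 2 = 0 := by
      apply Finset.sum_eq_zero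
      intro F hF
      rw [Finset.mem_filter] at hF
      apply w_eq_zero (M := M.localization F)
      right; left
      rw [localization_rank]
      omega
    have hS2 : ∑ F ∈ M.flats.filter (fun F => (M.rk F : ℤ) = (M.rank : ℤ) - 3),
        ((M.localization F).W 0 1 : ℤ) *
          (((M.restrictionAt F).W 0 2 : ℤ) - ((M.restrictionAt F).W 0 1 : ℤ)) = 0 := by
      apply Finset.sum_eq_zero
      intro F hF
      rw [Finset.mem_filter] at hF
      exact absurd hF.2 (by omega)
    have hS3 : ∑ F ∈ M.flats.filter (fun F => (M.rk F : ℤ) = (M.rank : ℤ) - 5),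
        ((M.restrictionAt F).w 0 2 - ((M.restrictionAt F).W 1 4 : ℤ)
          + ((M.restrictionAt F).W 0 3 : ℤ) + ((M.restrictionAt F).W 2 4 : ℤ)
          - ((M.restrictionAt F).W 2 3 : ℤ)) = 0 := by
      apply Finset.sum_eq_zero
      intro F hF
      rw [Finset.mem_filter] at hF
      exact absurd hF.2 (by omega)
    rw [hL, hw03, hW1, hW2, hW3, hW4, hS1, hS2, hS3]
    norm_num
  · -- main case: d ≥ 3
    rw [coeff_P_eq P hP M hM (by omega)]
    have hterm : ∀ F ∈ M.flats,
        ((M.localization F).charPoly * P (M.restrictionAt F)).coeff (M.rank - 3)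
          = (if (M.rk F : ℤ) = (M.rank : ℤ) then M.w 0 3 else 0)
            + (if (M.rk F : ℤ) = (M.rank : ℤ) - 1 then (M.localization F).w 0 2 else 0)
            + (if (M.rk F : ℤ) = (M.rank : ℤ) - 2 then
                -((M.localization F).W 0 1 : ℤ) else 0)
            + (if (M.rk F : ℤ) = (M.rank : ℤ) - 3 then
                1 - ((M.localization F).W 0 1 : ℤ) *
                  (((M.restrictionAt F).W 0 2 : ℤ) - ((M.restrictionAt F).W 0 1 : ℤ))
                else 0)
            + (if (M.rk F : ℤ) = (M.rank : ℤ) - 4 then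
                ((M.restrictionAt F).W 0 3 : ℤ) - ((M.restrictionAt F).W 0 1 : ℤ) else 0)
            + (if (M.rk F : ℤ) = (M.rank : ℤ) - 5 then
                ((M.restrictionAt F).w 0 2 - ((M.restrictionAt F).W 1 4 : ℤ)
                  + ((M.restrictionAt F).W 0 3 : ℤ) + ((M.restrictionAt F).W 2 4 : ℤ)
                  - ((M.restrictionAt F).W 2 3 : ℤ)) else 0) := by
      intro F hF
      have hrkle : M.rk F ≤ M.rank := rk_le_rank F
      have hrr : (M.restrictionAt F).rank = M.rank - M.rk F := restrictionAt_rank F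
      by_cases hr0 : (M.rk F : ℤ) = (M.rank : ℤ)
      · have hFu : F = Finset.univ :=
          flat_eq_univ_of_rk_eq_rank (mem_flats.mp hF) (by exact_mod_cast hr0)
        subst hFu
        rw [if_pos hr0, if_neg (by omega), if_neg (by omega), if_neg (by omega),
          if_neg (by omega), if_neg (by omega), prod_coeff, P_restriction_univ P hP M]
        rw [Finset.sum_eq_single (M.rank - 3)]
        · rw [Nat.sub_self, charPoly_loc_coeff hM]
          have hru : M.rk (Finset.univ : Finset M.E) = M.rank := rfl
          rw [show (M.rk (Finset.univ : Finset M.E) : ℤ) - ((M.rank - 3 : ℕ) : ℤ) = 3 by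
            rw [hru]; omega]
          rw [w_localization_univ hM]
          simp
        · intro b hb hbne
          rw [Finset.mem_range] at hb
          have hz : (1 : Polynomial ℤ).coeff (M.rank - 3 - b) = 0 := by
            rw [Polynomial.coeff_one]
            simp only [ite_eq_right_iff]
            intro hc
            omega
          rw [hz, mul_zero]
        · intro hdm
          exact absurd (Finset.mem_range.mpr (by omega)) hdm
      · by_cases hr1 : (M.rk F : ℤ) = (M.rank : ℤ) - 1
        · rw [if_neg hr0, if_pos hr1, if_neg (by omega), if_neg (by omega),
            if_neg (by omega), if_neg (by omega), prod_coeff]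
          rw [Finset.sum_eq_single (M.rank - 3)]
          · rw [Nat.sub_self, charPoly_loc_coeff hM,
              coeff_P_zero P hP _ (restrictionAt_loopless (mem_flats.mp hF))]
            rw [show (M.rk F : ℤ) - ((M.rank - 3 : ℕ) : ℤ) = 2 by omega]
            ring
          · intro b hb hbne
            rw [Finset.mem_range] at hb
            have hz : (P (M.restrictionAt F)).coeff (M.rank - 3 - b) = 0 :=
              coeff_P_restriction_eq_zero P hP hM hF (by omega) (by omega)
            rw [hz, mul_zero]
          · intro hdm
            exact absurd (Finset.mem_range.mpr (by omega)) hdm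
        · by_cases hr2 : (M.rk F : ℤ) = (M.rank : ℤ) - 2
          · rw [if_neg hr0, if_neg hr1, if_pos hr2, if_neg (by omega),
              if_neg (by omega), if_neg (by omega), prod_coeff]
            rw [Finset.sum_eq_single (M.rank - 3)]
            · rw [Nat.sub_self, charPoly_loc_coeff hM,
                coeff_P_zero P hP _ (restrictionAt_loopless (mem_flats.mp hF))]
              rw [show (M.rk F : ℤ) - ((M.rank - 3 : ℕ) : ℤ) = 1 by omega]
              rw [w_zero_one (localization_loopless hM F)]
              ring
            · intro b hb hbne
              rw [Finset.mem_range] at hb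
              have hz : (P (M.restrictionAt F)).coeff (M.rank - 3 - b) = 0 :=
                coeff_P_restriction_eq_zero P hP hM hF (by omega) (by omega)
              rw [hz, mul_zero]
            · intro hdm
              exact absurd (Finset.mem_range.mpr (by omega)) hdm
          · by_cases hr3 : (M.rk F : ℤ) = (M.rank : ℤ) - 3
            · rw [if_neg hr0, if_neg hr1, if_neg hr2, if_pos hr3, if_neg (by omega),
                if_neg (by omega)]
              simp only [zero_add, add_zero]
              rcases lt_or_ge M.rank 4 with hd3 | hd4
              · -- d = 3, rk F = 0
                have hW0 : ((M.localization F).W 0 1 : ℤ) = 0 := by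
                  rw [show ((M.localization F).W 0 1 : ℤ) = ((0 : ℕ) : ℤ) from ?_]
                  · norm_num
                  · norm_cast
                    apply W_eq_zero (M := M.localization F)
                    right; right; right
                    rw [localization_rank]
                    omega
                rw [prod_coeff, show M.rank - 3 + 1 = 1 by omega, Finset.range_one,
                  Finset.sum_singleton]
                rw [show M.rank - 3 - 0 = 0 by omega, charPoly_loc_coeff hM,
                  coeff_P_zero P hP _ (restrictionAt_loopless (mem_flats.mp hF))]
                rw [show (M.rk F : ℤ) - ((0 : ℕ) : ℤ) = 0 by omega]
                rw [w_zero_zero (localization_loopless hM F), hW0]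
                ring
              · -- d ≥ 4: two surviving terms
                rw [prod_coeff]
                have hsplit : ∀ b ∈ Finset.range (M.rank - 3 + 1),
                    (M.localization F).charPoly.coeff b
                        * (P (M.restrictionAt F)).coeff (M.rank - 3 - b)
                      = (if b = M.rank - 3 then (1 : ℤ) else 0)
                        + (if b = M.rank - 4 then
                            -((M.localization F).W 0 1 : ℤ) *
                              (((M.restrictionAt F).W 0 2 : ℤ)
                                - ((M.restrictionAt F).W 0 1 : ℤ)) else 0) := by
                  intro b hb
                  rw [Finset.mem_range] at hb
                  by_cases hb1 : b = M.rank - 3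
                  · subst hb1
                    rw [if_pos rfl, if_neg (by omega), add_zero, Nat.sub_self,
                      charPoly_loc_coeff hM,
                      coeff_P_zero P hP _ (restrictionAt_loopless (mem_flats.mp hF))]
                    rw [show (M.rk F : ℤ) - ((M.rank - 3 : ℕ) : ℤ) = 0 by omega]
                    rw [w_zero_zero (localization_loopless hM F)]
                    ring
                  · by_cases hb2 : b = M.rank - 4
                    · subst hb2
                      rw [if_neg hb1, if_pos rfl, zero_add, charPoly_loc_coeff hM]
                      rw [show (M.rk F : ℤ) - ((M.rank - 4 : ℕ) : ℤ) = 1 by omega]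
                      rw [w_zero_one (localization_loopless hM F)]
                      rw [show M.rank - 3 - (M.rank - 4) = 1 by omega]
                      rw [coeff_P_one P hP _ (restrictionAt_loopless (mem_flats.mp hF))
                        (by omega)]
                      rw [show ((M.restrictionAt F).rank : ℤ) - 1 = 2 by omega]
                    · rw [if_neg hb1, if_neg hb2, add_zero]
                      have hz : (P (M.restrictionAt F)).coeff (M.rank - 3 - b) = 0 :=
                        coeff_P_restriction_eq_zero P hP hM hF (by omega) (by omega)
                      rw [hz, mul_zero]
                rw [Finset.sum_congr rfl hsplit, Finset.sum_add_distrib,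
                  Finset.sum_ite_eq' _ (M.rank - 3), Finset.sum_ite_eq' _ (M.rank - 4),
                  if_pos (Finset.mem_range.mpr (by omega)),
                  if_pos (Finset.mem_range.mpr (by omega))]
                ring
            · by_cases hr4 : (M.rk F : ℤ) = (M.rank : ℤ) - 4
              · rw [if_neg hr0, if_neg hr1, if_neg hr2, if_neg hr3, if_pos hr4,
                  if_neg (by omega), prod_coeff]
                rw [Finset.sum_eq_single (M.rank - 4)]
                · rw [charPoly_loc_coeff hM]
                  rw [show (M.rk F : ℤ) - ((M.rank - 4 : ℕ) : ℤ) = 0 by omega]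
                  rw [w_zero_zero (localization_loopless hM F)]
                  rw [show M.rank - 3 - (M.rank - 4) = 1 by omega]
                  rw [coeff_P_one P hP _ (restrictionAt_loopless (mem_flats.mp hF))
                    (by omega)]
                  rw [show ((M.restrictionAt F).rank : ℤ) - 1 = 3 by omega]
                  ring
                · intro b hb hbne
                  rw [Finset.mem_range] at hb
                  by_cases hb1 : b = M.rank - 3
                  · subst hb1
                    have hz : (M.localization F).charPoly.coeff (M.rank - 3) = 0 := by
                      rw [charPoly_loc_coeff hM]
                      apply w_eq_zero
                      left
                      omega
                    rw [hz, zero_mul]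
                  · have hz : (P (M.restrictionAt F)).coeff (M.rank - 3 - b) = 0 :=
                      coeff_P_restriction_eq_zero P hP hM hF (by omega) (by omega)
                    rw [hz, mul_zero]
                · intro hdm
                  exact absurd (Finset.mem_range.mpr (by omega)) hdm
              · by_cases hr5 : (M.rk F : ℤ) = (M.rank : ℤ) - 5
                · rw [if_neg hr0, if_neg hr1, if_neg hr2, if_neg hr3, if_neg hr4,
                    if_pos hr5, prod_coeff]
                  simp only [zero_add]
                  rw [Finset.sum_eq_single (M.rank - 5)]
                  · rw [charPoly_loc_coeff hM]
                    rw [show (M.rk F : ℤ) - ((M.rank - 5 : ℕ) : ℤ) = 0 by omega]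
                    rw [w_zero_zero (localization_loopless hM F)]
                    rw [show M.rank - 3 - (M.rank - 5) = 2 by omega]
                    rw [coeff_P_two_rank5 P hP _ (restrictionAt_loopless (mem_flats.mp hF))
                      (by omega)]
                    ring
                  · intro b hb hbne
                    rw [Finset.mem_range] at hb
                    by_cases hb1 : M.rank - 4 ≤ b
                    · have hz : (M.localization F).charPoly.coeff b = 0 := by
                        rw [charPoly_loc_coeff hM]
                        apply w_eq_zero
                        left
                        omega
                      rw [hz, zero_mul]
                    · have hz : (P (M.restrictionAt F)).coeff (M.rank - 3 - b) = 0 :=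
                        coeff_P_restriction_eq_zero P hP hM hF (by omega) (by omega)
                      rw [hz, mul_zero]
                  · intro hdm
                    exact absurd (Finset.mem_range.mpr (by omega)) hdm
                · rw [if_neg hr0, if_neg hr1, if_neg hr2, if_neg hr3, if_neg hr4,
                    if_neg hr5, prod_coeff]
                  simp only [add_zero]
                  apply Finset.sum_eq_zero
                  intro k hk
                  rw [Finset.mem_range] at hk
                  have hrkpos : (0 : ℤ) ≤ (M.rk F : ℤ) := Int.natCast_nonneg _
                  by_cases hkr : k ≤ M.rk F
                  · have hz : (P (M.restrictionAt F)).coeff (M.rank - 3 - k) = 0 :=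
                      coeff_P_restriction_eq_zero P hP hM hF (by omega) (by omega)
                    rw [hz, mul_zero]
                  · have hz : (M.localization F).charPoly.coeff k = 0 := by
                      rw [charPoly_loc_coeff hM]
                      apply w_eq_zero
                      left
                      omega
                    rw [hz, zero_mul]
    rw [Finset.sum_congr rfl hterm]
    rw [Finset.sum_add_distrib, Finset.sum_add_distrib, Finset.sum_add_distrib,
      Finset.sum_add_distrib, Finset.sum_add_distrib]
    rw [← Finset.sum_filter, ← Finset.sum_filter, ← Finset.sum_filter,
      ← Finset.sum_filter, ← Finset.sum_filter, ← Finset.sum_filter]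
    rw [filter_rank_top, Finset.sum_singleton]
    have hp3 : ∑ F ∈ M.flats.filter (fun F => (M.rk F : ℤ) = (M.rank : ℤ) - 2),
        (-((M.localization F).W 0 1 : ℤ)) = -(M.W 1 ((M.rank : ℤ) - 2) : ℤ) := by
      rw [Finset.sum_neg_distrib, sum_W01_localization hM ((M.rank : ℤ) - 2)]
    have hp4 : ∑ F ∈ M.flats.filter (fun F => (M.rk F : ℤ) = (M.rank : ℤ) - 3),
        (1 - ((M.localization F).W 0 1 : ℤ) *
          (((M.restrictionAt F).W 0 2 : ℤ) - ((M.restrictionAt F).W 0 1 : ℤ)))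
        = (M.W 0 ((M.rank : ℤ) - 3) : ℤ)
          - ∑ F ∈ M.flats.filter (fun F => (M.rk F : ℤ) = (M.rank : ℤ) - 3),
              ((M.localization F).W 0 1 : ℤ) *
                (((M.restrictionAt F).W 0 2 : ℤ) - ((M.restrictionAt F).W 0 1 : ℤ)) := by
      rw [Finset.sum_sub_distrib, Finset.sum_const, W_zero_eq hM ((M.rank : ℤ) - 3),
        nsmul_eq_mul, mul_one]
    have hp5 : ∑ F ∈ M.flats.filter (fun F => (M.rk F : ℤ) = (M.rank : ℤ) - 4),
        (((M.restrictionAt F).W 0 3 : ℤ) - ((M.restrictionAt F).W 0 1 : ℤ))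
        = (M.W ((M.rank : ℤ) - 4) ((M.rank : ℤ) - 1) : ℤ)
          - (M.W ((M.rank : ℤ) - 4) ((M.rank : ℤ) - 3) : ℤ) := by
      rw [Finset.sum_sub_distrib,
        sum_W_restriction hM ((M.rank : ℤ) - 4) 3 ((M.rank : ℤ) - 1) (by ring),
        sum_W_restriction hM ((M.rank : ℤ) - 4) 1 ((M.rank : ℤ) - 3) (by ring)]
    rw [hp3, hp4, hp5]
    ring
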